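/- arXiv:2002.09046 — 3 statements merged into one kernel-verified Lean document; each statement's English description precedes it below -/
import Mathlib

section
/- Let p be a probability density on ℝⁿ, let L : ℝⁿ → ℝ be measurable with 0 ≤ L(x) ≤ 1 for all x, and suppose π := ∫ L(x) p(x) dx ∈ (0,1). Define q₁(x) := L(x) p(x) / π, q₀(x) := (1−L(x)) p(x) / (1−π), m(x) := (q₀(x)+q₁(x))/2, f₁(x) := L(x)/π, and f₀(x) := (1−L(x))/(1−π). Then the Jensen–Shannon divergence satisfies JS(q₀ ‖ q₁) = ½ ∫ [ f₁(x) · log( f₁(x) / (f₁(x)+f₀(x)) ) + f₀(x) · log( f₀(x) / (f₁(x)+f₀(x)) ) ] p(x) dx + log 2, where JS(q₀ ‖ q₁) := ½ ∫ q₁(x) log(q₁(x)/m(x)) dx + ½ ∫ q₀(x) log(q₀(x)/m(x)) dx, all integrals are Lebesgue integrals (which here are well defined in the extended reals), and the convention 0 · log 0 = 0 is used. -/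
/-!
With `f₁ = L / π` and `f₀ = (1 - L) / (1 - π)` the conditionals are `q₁ = f₁ p` and
`q₀ = f₀ p`, so `qᵢ log (qᵢ / (q₁ + q₀)) = fᵢ log (fᵢ / (f₁ + f₀)) p`, both sides vanishing
where `p = 0`. As `m = (q₁ + q₀) / 2`, each Kullback–Leibler term of the divergence is such an
integral plus `log 2 · ∫ qᵢ = log 2`. Integrability comes from `1 - 1/x ≤ log x`, which gives
`|a log (a / s)| ≤ s - a` for `0 ≤ a ≤ s`: the integrands are dominated by `q₀` resp. `q₁`.
-/

open MeasureTheory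

section

open Real

lemma abs_mul_log_div_le_sub {a s : ℝ} (ha : 0 ≤ a) (has : a ≤ s) :
    |a * log (a / s)| ≤ s - a := by
  rcases ha.eq_or_lt with rfl | ha
  · simpa using has
  have hs : 0 < s := ha.trans_le has
  have hlog_nonpos : log (a / s) ≤ 0 := log_nonpos (by positivity) ((div_le_one hs).2 has)
  have hlog_ge : 1 - (a / s)⁻¹ ≤ log (a / s) := one_sub_inv_le_log_of_pos (by positivity)
  have hmul : a * (1 - (a / s)⁻¹) = a - s := by field_simp
  rw [abs_of_nonpos (mul_nonpos_of_nonneg_of_nonpos ha.le hlog_nonpos)]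
  nlinarith [mul_le_mul_of_nonneg_left hlog_ge ha.le]

lemma mul_log_div_half {a s : ℝ} (ha : 0 ≤ a) (has : a ≤ s) :
    a * log (a / (s / 2)) = a * log (a / s) + log 2 * a := by
  rcases ha.eq_or_lt with rfl | ha
  · simp
  have hs : 0 < s := ha.trans_le has
  rw [show a / (s / 2) = 2 * (a / s) by ring, log_mul two_ne_zero (by positivity)]
  ring

lemma mul_mul_log_div_mul_right (a s : ℝ) {P : ℝ} (hP : 0 ≤ P) :
    a * P * log (a * P / (s * P)) = a * log (a / s) * P := by
  rcases hP.eq_or_lt with rfl | hP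
  · simp
  rw [mul_div_mul_right _ _ hP.ne']
  ring

variable {α : Type*} [MeasurableSpace α] {μ : Measure α} {u v w : α → ℝ}

lemma integrable_mul_log_div (hu : Integrable u μ) (hw : Integrable w μ)
    (hu_nonneg : ∀ x, 0 ≤ u x) (hu_le : ∀ x, u x ≤ w x) :
    Integrable (fun x => u x * log (u x / w x)) μ :=
  (hw.sub hu).mono'
    (hu.aemeasurable.mul (hu.aemeasurable.div hw.aemeasurable).log).aestronglyMeasurable
    (ae_of_all _ fun x =>
      (norm_eq_abs _).trans_le (abs_mul_log_div_le_sub (hu_nonneg x) (hu_le x)))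

lemma integral_mul_log_div_half (hu : Integrable u μ) (hw : Integrable w μ)
    (hu_nonneg : ∀ x, 0 ≤ u x) (hu_le : ∀ x, u x ≤ w x) :
    ∫ x, u x * log (u x / (w x / 2)) ∂μ =
      ∫ x, u x * log (u x / w x) ∂μ + log 2 * ∫ x, u x ∂μ := by
  rw [integral_congr_ae (ae_of_all _ fun x => mul_log_div_half (hu_nonneg x) (hu_le x)),
    integral_add (integrable_mul_log_div hu hw hu_nonneg hu_le) (hu.const_mul _),
    integral_const_mul]

theorem jensenShannon_eq_integral_add_log_two (hu_nonneg : ∀ x, 0 ≤ u x)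
    (hv_nonneg : ∀ x, 0 ≤ v x) (hu : ∫ x, u x ∂μ = 1) (hv : ∫ x, v x ∂μ = 1) :
    1 / 2 * ∫ x, u x * log (u x / ((u x + v x) / 2)) ∂μ +
        1 / 2 * ∫ x, v x * log (v x / ((u x + v x) / 2)) ∂μ =
      1 / 2 * ∫ x, (u x * log (u x / (u x + v x)) + v x * log (v x / (u x + v x))) ∂μ +
        log 2 := by
  have hu_int := integrable_of_integral_eq_one hu
  have hv_int := integrable_of_integral_eq_one hv
  have huv_int : Integrable (fun x => u x + v x) μ := hu_int.add hv_int
  have hu_le : ∀ x, u x ≤ u x + v x := fun x => le_add_of_nonneg_right (hv_nonneg x)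
  have hv_le : ∀ x, v x ≤ u x + v x := fun x => le_add_of_nonneg_left (hu_nonneg x)
  rw [integral_mul_log_div_half hu_int huv_int hu_nonneg hu_le,
    integral_mul_log_div_half hv_int huv_int hv_nonneg hv_le,
    integral_add (integrable_mul_log_div hu_int huv_int hu_nonneg hu_le)
      (integrable_mul_log_div hv_int huv_int hv_nonneg hv_le), hu, hv]
  ring

end

theorem neural_bayes_DML_JS_identity_general {n : ℕ}
    (p : (Fin n → ℝ) → ℝ)
    (hp_nonneg : ∀ x, 0 ≤ p x) (hp_int : ∫ x, p x = 1)
    (L : (Fin n → ℝ) → ℝ)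
    (hL01 : ∀ x, L x ∈ Set.Icc (0 : ℝ) 1)
    (π : ℝ) (hπ_def : π = ∫ x, L x * p x) (hπ_mem : π ∈ Set.Ioo (0 : ℝ) 1)
    (q₁ q₀ m f₁ f₀ : (Fin n → ℝ) → ℝ)
    (hq₁ : ∀ x, q₁ x = L x * p x / π)
    (hq₀ : ∀ x, q₀ x = (1 - L x) * p x / (1 - π))
    (hm : ∀ x, m x = (q₀ x + q₁ x) / 2)
    (hf₁ : ∀ x, f₁ x = L x / π)
    (hf₀ : ∀ x, f₀ x = (1 - L x) / (1 - π)) :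
    (1 / 2) * (∫ x, q₁ x * Real.log (q₁ x / m x)) +
      (1 / 2) * (∫ x, q₀ x * Real.log (q₀ x / m x)) =
    (1 / 2) * (∫ x, (f₁ x * Real.log (f₁ x / (f₁ x + f₀ x)) +
        f₀ x * Real.log (f₀ x / (f₁ x + f₀ x))) * p x) + Real.log 2 := by
  obtain ⟨hπ_pos, hπ_lt_one⟩ := hπ_mem
  have hLp_int : Integrable (fun x => L x * p x) :=
    .of_integral_ne_zero (hπ_def ▸ hπ_pos.ne')
  have hq₁_int : ∫ x, q₁ x = 1 := by
    simp_rw [hq₁]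
    rw [integral_div, ← hπ_def, div_self hπ_pos.ne']
  have hq₀_int : ∫ x, q₀ x = 1 := by
    simp_rw [hq₀, sub_mul, one_mul]
    rw [integral_div, integral_sub (integrable_of_integral_eq_one hp_int) hLp_int, hp_int,
      ← hπ_def, div_self (sub_pos.2 hπ_lt_one).ne']
  have hq₁_nonneg : ∀ x, 0 ≤ q₁ x := fun x =>
    hq₁ x ▸ div_nonneg (mul_nonneg (hL01 x).1 (hp_nonneg x)) hπ_pos.le
  have hq₀_nonneg : ∀ x, 0 ≤ q₀ x := fun x =>
    hq₀ x ▸ div_nonneg (mul_nonneg (sub_nonneg.2 (hL01 x).2) (hp_nonneg x))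
      (sub_pos.2 hπ_lt_one).le
  have hq₁_eq : ∀ x, q₁ x = f₁ x * p x := fun x => by rw [hq₁, hf₁]; ring
  have hq₀_eq : ∀ x, q₀ x = f₀ x * p x := fun x => by rw [hq₀, hf₀]; ring
  have hintegrand : ∀ x, (f₁ x * Real.log (f₁ x / (f₁ x + f₀ x)) +
      f₀ x * Real.log (f₀ x / (f₁ x + f₀ x))) * p x =
      q₁ x * Real.log (q₁ x / (q₁ x + q₀ x)) + q₀ x * Real.log (q₀ x / (q₁ x + q₀ x)) := by
    intro x
    rw [hq₁_eq, hq₀_eq, ← add_mul, mul_mul_log_div_mul_right _ _ (hp_nonneg x),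
      mul_mul_log_div_mul_right _ _ (hp_nonneg x), add_mul]
  simp_rw [hm, add_comm (q₀ _), hintegrand]
  exact jensenShannon_eq_integral_add_log_two hq₁_nonneg hq₀_nonneg hq₁_int hq₀_int

/-- **Key identity of Proposition 2 (Neural Bayes-DML).**
Via the binary Neural Bayes parameterization `q₁ = Lp/π`, `q₀ = (1−L)p/(1−π)` with
`π = ∫ L p ∈ (0,1)`, the Jensen–Shannon divergence
`JS(q₀ ‖ q₁) = ½ ∫ q₁ log(q₁/m) + ½ ∫ q₀ log(q₀/m)` with `m = (q₀+q₁)/2` equals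
`½ ∫ [f₁ log(f₁/(f₁+f₀)) + f₀ log(f₀/(f₁+f₀))] p + log 2`, where `f₁ = L/π` and
`f₀ = (1−L)/(1−π)` (natural logs, convention `0 · log 0 = 0`). -/
theorem neural_bayes_DML_JS_identity {n : ℕ}
    (p : (Fin n → ℝ) → ℝ) (hp_meas : Measurable p)
    (hp_nonneg : ∀ x, 0 ≤ p x) (hp_int : ∫ x, p x = 1)
    (L : (Fin n → ℝ) → ℝ) (hL_meas : Measurable L)
    (hL01 : ∀ x, L x ∈ Set.Icc (0 : ℝ) 1)
    (π : ℝ) (hπ_def : π = ∫ x, L x * p x) (hπ_mem : π ∈ Set.Ioo (0 : ℝ) 1)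
    (q₁ q₀ m f₁ f₀ : (Fin n → ℝ) → ℝ)
    (hq₁ : ∀ x, q₁ x = L x * p x / π)
    (hq₀ : ∀ x, q₀ x = (1 - L x) * p x / (1 - π))
    (hm : ∀ x, m x = (q₀ x + q₁ x) / 2)
    (hf₁ : ∀ x, f₁ x = L x / π)
    (hf₀ : ∀ x, f₀ x = (1 - L x) / (1 - π)) :
    (1 / 2) * (∫ x, q₁ x * Real.log (q₁ x / m x)) +
      (1 / 2) * (∫ x, q₀ x * Real.log (q₀ x / m x)) =
    (1 / 2) * (∫ x, (f₁ x * Real.log (f₁ x / (f₁ x + f₀ x)) +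
        f₀ x * Real.log (f₀ x / (f₁ x + f₀ x))) * p x) + Real.log 2 :=
  neural_bayes_DML_JS_identity_general p hp_nonneg hp_int L hL01 π hπ_def hπ_mem q₁ q₀ m f₁ f₀ hq₁
    hq₀ hm hf₁ hf₀
end

section
/- Let p be a probability density on ℝⁿ whose positivity set {x : p(x) > 0} equals S₁ ∪ S₂, where S₁ and S₂ are nonempty, disjoint, open, path-connected subsets of ℝⁿ. Let L : ℝⁿ → ℝ be continuous with 0 ≤ L(x) ≤ 1 for all x and π := ∫ L(x) p(x) dx ∈ (0,1), and suppose L maximizes the Neural Bayes-DML objective, i.e. Obj(L) := ½ ∫ [ f₁ log( f₁/(f₁+f₀) ) + f₀ log( f₀/(f₁+f₀) ) ] p dx + log 2 = log 2, where f₁(x) := L(x)/π and f₀(x) := (1−L(x))/(1−π). Then exactly one of the following holds: (L(x) = 0 for all x ∈ S₁ and L(x) = 1 for all x ∈ S₂), or (L(x) = 1 for all x ∈ S₁ and L(x) = 0 for all x ∈ S₂). -/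
/-! Writing `h` for the binary entropy, the integrand of the objective is
`-(f₁ + f₀) h(f₁ / (f₁ + f₀)) p ≤ 0`, so the objective equals `log 2` only if this vanishes
almost everywhere. It is strictly negative wherever `p > 0` and `0 < L < 1`, an open set by
continuity of `L` and openness of `S₁ ∪ S₂`, which must therefore be empty. Thus `L` only takes
the values `0` and `1` on the connected sets `S₁` and `S₂`, so it is constant on each, and the
two constants differ because `π = ∫ L p` is neither `0` nor `1`. -/

open MeasureTheory

section

open Real Set

theorem Real.mul_log_div_add_add_mul_log_div_add (a b : ℝ) :
    a * log (a / (a + b)) + b * log (b / (a + b)) = -((a + b) * binEntropy (a / (a + b))) := by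
  rcases eq_or_ne (a + b) 0 with h | h
  · simp [h]
  · have h' : 1 - a / (a + b) = b / (a + b) := by field_simp; ring
    rw [binEntropy, h', log_inv, log_inv]
    field_simp
    ring

theorem IsPreconnected.eqOn_or_eqOn_of_mapsTo_pair {α β : Type*} [TopologicalSpace α]
    [TopologicalSpace β] [T1Space β] {S : Set α} {f : α → β} {a b : β}
    (hS : IsPreconnected S) (hf : ContinuousOn f S) (hmaps : MapsTo f S {a, b}) :
    (∀ x ∈ S, f x = a) ∨ (∀ x ∈ S, f x = b) := by
  simpa [EqOn] using
    hS.eqOn_const_of_mapsTo (toFinite _).isDiscrete hf hmaps (insert_nonempty _ _)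

theorem IsOpen.eq_empty_of_integral_eq_zero {X : Type*} [TopologicalSpace X] [MeasurableSpace X]
    {μ : Measure X} [μ.IsOpenPosMeasure] {G : X → ℝ} {V : Set X} (hV : IsOpen V) (hG : 0 ≤ G)
    (hGi : Integrable G μ) (h0 : ∫ x, G x ∂μ = 0) (hpos : ∀ x ∈ V, 0 < G x) : V = ∅ := by
  have hae : G =ᵐ[μ] 0 := (integral_eq_zero_iff_of_nonneg hG hGi).1 h0
  exact (hV.measure_eq_zero_iff μ).1 <|
    measure_mono_null (fun x hx ↦ (hpos x hx).ne') (ae_iff.1 hae)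

theorem integral_mul_eq_const_mul_integral {X : Type*} [MeasurableSpace X] {μ : Measure X}
    {L p : X → ℝ} {c : ℝ} (h : ∀ x, p x ≠ 0 → L x = c) :
    ∫ x, L x * p x ∂μ = c * ∫ x, p x ∂μ := by
  rw [← integral_const_mul]
  congr 1 with x
  by_cases hx : p x = 0
  · simp [hx]
  · rw [h x hx]

theorem eq_zero_or_eq_zero_of_integral_mul_log_div_add_eq_zero {X : Type*} [TopologicalSpace X]
    [MeasurableSpace X] [OpensMeasurableSpace X] {μ : Measure X} [μ.IsOpenPosMeasure]
    {p f₁ f₀ : X → ℝ} {U : Set X} {C : ℝ} (hp : 0 ≤ p) (hpi : Integrable p μ) (hU : IsOpen U)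
    (hpU : ∀ x ∈ U, 0 < p x) (hf₁ : Continuous f₁) (hf₀ : Continuous f₀) (hf₁0 : 0 ≤ f₁)
    (hf₀0 : 0 ≤ f₀) (hC : ∀ x, f₁ x + f₀ x ≤ C)
    (h0 : ∫ x, (f₁ x * log (f₁ x / (f₁ x + f₀ x)) + f₀ x * log (f₀ x / (f₁ x + f₀ x))) * p x ∂μ
      = 0) :
    ∀ x ∈ U, f₁ x = 0 ∨ f₀ x = 0 := by
  simp_rw [mul_log_div_add_add_mul_log_div_add, neg_mul, integral_neg, neg_eq_zero] at h0
  set g := fun x ↦ (f₁ x + f₀ x) * binEntropy (f₁ x / (f₁ x + f₀ x))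
  have hw0 : ∀ x, 0 ≤ f₁ x + f₀ x := fun x ↦ add_nonneg (hf₁0 x) (hf₀0 x)
  have hh0 : ∀ x, 0 ≤ binEntropy (f₁ x / (f₁ x + f₀ x)) := fun x ↦
    binEntropy_nonneg (div_nonneg (hf₁0 x) (hw0 x))
      (div_le_one_of_le₀ (le_add_of_nonneg_right (hf₀0 x)) (hw0 x))
  have hg_bound : ∀ x, ‖g x‖ ≤ C * log 2 := fun x ↦ by
    rw [Real.norm_of_nonneg (mul_nonneg (hw0 x) (hh0 x))]
    exact mul_le_mul (hC x) binEntropy_le_log_two (hh0 x) ((hw0 x).trans (hC x))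
  have hg_meas : Measurable g := by
    have := hf₁.measurable
    have := hf₀.measurable
    have := binEntropy_continuous.measurable
    fun_prop
  have hgi : Integrable (fun x ↦ g x * p x) μ :=
    hpi.bdd_mul hg_meas.aestronglyMeasurable (ae_of_all _ hg_bound)
  have hpos : ∀ x ∈ U ∩ {x | 0 < f₁ x} ∩ {x | 0 < f₀ x}, 0 < g x * p x := by
    rintro x ⟨⟨hxU, h₁ : 0 < f₁ x⟩, h₀ : 0 < f₀ x⟩
    have hq₀ : 0 < f₁ x / (f₁ x + f₀ x) := by positivity
    have hq₁ : f₁ x / (f₁ x + f₀ x) < 1 := (div_lt_one (by positivity)).2 (by linarith)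
    exact mul_pos (mul_pos (by positivity) (binEntropy_pos hq₀ hq₁)) (hpU x hxU)
  have hV : IsOpen (U ∩ {x | 0 < f₁ x} ∩ {x | 0 < f₀ x}) :=
    (hU.inter (isOpen_lt continuous_const hf₁)).inter (isOpen_lt continuous_const hf₀)
  have hV_empty := hV.eq_empty_of_integral_eq_zero
    (fun x ↦ mul_nonneg (mul_nonneg (hw0 x) (hh0 x)) (hp x)) hgi h0 hpos
  intro x hx
  by_contra! h
  exact hV_empty.subset ⟨⟨hx, (hf₁0 x).lt_of_ne' h.1⟩, (hf₀0 x).lt_of_ne' h.2⟩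

theorem mapsTo_zero_one_of_integral_mul_log_div_add_eq_zero {X : Type*} [TopologicalSpace X]
    [MeasurableSpace X] [OpensMeasurableSpace X] {μ : Measure X} [μ.IsOpenPosMeasure]
    {p L : X → ℝ} {U : Set X} {t : ℝ} (hp : 0 ≤ p) (hpi : Integrable p μ) (hU : IsOpen U)
    (hpU : ∀ x ∈ U, 0 < p x) (hL : Continuous L) (hL01 : ∀ x, L x ∈ Icc 0 1) (ht : t ∈ Ioo 0 1)
    (h0 : ∫ x, (L x / t * log (L x / t / (L x / t + (1 - L x) / (1 - t))) +
      (1 - L x) / (1 - t) * log ((1 - L x) / (1 - t) / (L x / t + (1 - L x) / (1 - t)))) * p x ∂μ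
      = 0) :
    MapsTo L U {0, 1} := by
  have ht0 : 0 < t := ht.1
  have h1t : 0 < 1 - t := sub_pos.2 ht.2
  have hbound : ∀ x, L x / t + (1 - L x) / (1 - t) ≤ 1 / t + 1 / (1 - t) := fun x ↦
    add_le_add (div_le_div_of_nonneg_right (hL01 x).2 ht0.le)
      (div_le_div_of_nonneg_right (by linarith [(hL01 x).1]) h1t.le)
  intro x hx
  have := eq_zero_or_eq_zero_of_integral_mul_log_div_add_eq_zero hp hpi hU hpU
    (hL.div_const t) ((continuous_const.sub hL).div_const (1 - t))
    (fun y ↦ div_nonneg (hL01 y).1 ht0.le) (fun y ↦ div_nonneg (sub_nonneg.2 (hL01 y).2) h1t.le)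
    hbound h0 x hx
  simpa [ht0.ne', h1t.ne', sub_eq_zero, eq_comm (b := L x)] using this

end

theorem neural_bayes_DML_maximizer_labels_components_general {n : ℕ}
    (p : (Fin n → ℝ) → ℝ)
    (hp_nonneg : ∀ x, 0 ≤ p x) (hp_int : ∫ x, p x = 1)
    (S₁ S₂ : Set (Fin n → ℝ))
    (hS₁ne : S₁.Nonempty)
    (hS₁open : IsOpen S₁) (hS₂open : IsOpen S₂)
    (hS₁conn : IsPathConnected S₁) (hS₂conn : IsPathConnected S₂)
    (hsupp : {x | 0 < p x} = S₁ ∪ S₂)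
    (L : (Fin n → ℝ) → ℝ) (hL_cont : Continuous L)
    (hL01 : ∀ x, L x ∈ Set.Icc (0 : ℝ) 1)
    (π : ℝ) (hπ_def : π = ∫ x, L x * p x) (hπ_mem : π ∈ Set.Ioo (0 : ℝ) 1)
    (f₁ f₀ : (Fin n → ℝ) → ℝ)
    (hf₁ : ∀ x, f₁ x = L x / π)
    (hf₀ : ∀ x, f₀ x = (1 - L x) / (1 - π))
    (hmax : (1 / 2) * (∫ x, (f₁ x * Real.log (f₁ x / (f₁ x + f₀ x)) +
        f₀ x * Real.log (f₀ x / (f₁ x + f₀ x))) * p x) + Real.log 2 = Real.log 2) :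
    Xor' ((∀ x ∈ S₁, L x = 0) ∧ (∀ x ∈ S₂, L x = 1))
         ((∀ x ∈ S₁, L x = 1) ∧ (∀ x ∈ S₂, L x = 0)) := by
  simp only [hf₁, hf₀] at hmax
  have hlabel : Set.MapsTo L (S₁ ∪ S₂) {0, 1} :=
    mapsTo_zero_one_of_integral_mul_log_div_add_eq_zero (μ := volume) hp_nonneg
      (.of_integral_ne_zero (by simp [hp_int])) (hS₁open.union hS₂open) (fun x hx ↦ hsupp.ge hx)
      hL_cont hL01 hπ_mem (by linarith)
  have hπ_eq (c : ℝ) (h₁ : ∀ x ∈ S₁, L x = c) (h₂ : ∀ x ∈ S₂, L x = c) : π = c := by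
    rw [hπ_def, integral_mul_eq_const_mul_integral, hp_int, mul_one]
    exact fun x hx ↦ (hsupp.le ((hp_nonneg x).lt_of_ne' hx)).elim (h₁ x) (h₂ x)
  obtain ⟨x₁, hx₁⟩ := hS₁ne
  rcases hS₁conn.isConnected.isPreconnected.eqOn_or_eqOn_of_mapsTo_pair hL_cont.continuousOn
    (hlabel.mono_left Set.subset_union_left) with h₁ | h₁ <;>
  rcases hS₂conn.isConnected.isPreconnected.eqOn_or_eqOn_of_mapsTo_pair hL_cont.continuousOn
    (hlabel.mono_left Set.subset_union_right) with h₂ | h₂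
  · linarith [hπ_eq 0 h₁ h₂, hπ_mem.1]
  · exact .inl ⟨⟨h₁, h₂⟩, fun h ↦ by simpa [h₁ x₁ hx₁] using h.1 x₁ hx₁⟩
  · exact .inr ⟨⟨h₁, h₂⟩, fun h ↦ by simpa [h₁ x₁ hx₁] using h.1 x₁ hx₁⟩
  · linarith [hπ_eq 1 h₁ h₂, hπ_mem.2]

/-- **Converse direction of Theorem 2 (optimality of Neural Bayes-DML).**
If the positivity set of the density `p` is the union of two nonempty, disjoint, open,
path-connected sets `S₁, S₂`, and a continuous `L : ℝⁿ → [0,1]` with `π = ∫ L p ∈ (0,1)`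
maximizes the Neural Bayes-DML objective (i.e. attains the value `log 2`), then exactly
one of the following holds: `L ≡ 0` on `S₁` and `L ≡ 1` on `S₂`, or `L ≡ 1` on `S₁` and
`L ≡ 0` on `S₂`. -/
theorem neural_bayes_DML_maximizer_labels_components {n : ℕ}
    (p : (Fin n → ℝ) → ℝ) (hp_meas : Measurable p)
    (hp_nonneg : ∀ x, 0 ≤ p x) (hp_int : ∫ x, p x = 1)
    (S₁ S₂ : Set (Fin n → ℝ))
    (hS₁ne : S₁.Nonempty) (hS₂ne : S₂.Nonempty)
    (hdisj : Disjoint S₁ S₂)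
    (hS₁open : IsOpen S₁) (hS₂open : IsOpen S₂)
    (hS₁conn : IsPathConnected S₁) (hS₂conn : IsPathConnected S₂)
    (hsupp : {x | 0 < p x} = S₁ ∪ S₂)
    (L : (Fin n → ℝ) → ℝ) (hL_cont : Continuous L)
    (hL01 : ∀ x, L x ∈ Set.Icc (0 : ℝ) 1)
    (π : ℝ) (hπ_def : π = ∫ x, L x * p x) (hπ_mem : π ∈ Set.Ioo (0 : ℝ) 1)
    (f₁ f₀ : (Fin n → ℝ) → ℝ)
    (hf₁ : ∀ x, f₁ x = L x / π)
    (hf₀ : ∀ x, f₀ x = (1 - L x) / (1 - π))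
    (hmax : (1 / 2) * (∫ x, (f₁ x * Real.log (f₁ x / (f₁ x + f₀ x)) +
        f₀ x * Real.log (f₀ x / (f₁ x + f₀ x))) * p x) + Real.log 2 = Real.log 2) :
    Xor' ((∀ x ∈ S₁, L x = 0) ∧ (∀ x ∈ S₂, L x = 1))
         ((∀ x ∈ S₁, L x = 1) ∧ (∀ x ∈ S₂, L x = 0)) :=
  neural_bayes_DML_maximizer_labels_components_general p hp_nonneg hp_int S₁ S₂ hS₁ne hS₁open
    hS₂open hS₁conn hS₂conn hsupp L hL_cont hL01 π hπ_def hπ_mem f₁ f₀ hf₁ hf₀ hmax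
end

section
/- Let p be a probability density on ℝⁿ, K ≥ 1, and L : ℝⁿ → ℝ^K measurable with L_k(x) ≥ 0 and ∑_{k=1}^K L_k(x) = 1 for every x; assume π_k := ∫ L_k(x) p(x) dx ∈ (0,1) for every k. Define q_k(x) := L_k(x) p(x)/π_k, q̄_k(x) := (1−L_k(x)) p(x)/(1−π_k), f_k(x) := L_k(x)/π_k, and f̄_k(x) := (1−L_k(x))/(1−π_k). Then: (i) q̄_k(x) = (p(x) − π_k q_k(x))/(1 − π_k) for every x and ∫ q̄_k(x) dx = 1; and (ii) the average Jensen–Shannon divergence satisfies (1/K) ∑_{k=1}^K JS(q_k ‖ q̄_k) = (1/(2K)) ∫ ∑_{k=1}^K [ f_k(x) · log( f_k(x)/(f_k(x)+f̄_k(x)) ) + f̄_k(x) · log( f̄_k(x)/(f_k(x)+f̄_k(x)) ) ] p(x) dx + log 2, where JS(a ‖ b) := ½ ∫ a log(a/m) + ½ ∫ b log(b/m) with m := (a+b)/2, all integrals are Lebesgue integrals (well defined in the extended reals), and the convention 0 · log 0 = 0 is used. -/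
/-!
Write `q_k = f_k p` and `q̄_k = f̄_k p`. The mixture `(q_k + q̄_k)/2` is `(f_k + f̄_k) p / 2`, so `p`
cancels inside the logarithms: `q_k log(q_k/m) = f_k log(f_k/(f_k + f̄_k)) p + q_k log 2`, and
likewise for `q̄_k`. Since `∫ q_k = ∫ q̄_k = 1`, this gives
`JS(q_k ‖ q̄_k) = ½ ∫ [f_k log(f_k/(f_k+f̄_k)) + f̄_k log(f̄_k/(f_k+f̄_k))] p + log 2`, and averaging
over `k` gives the claim. Every integral involved is finite because `|a log(a/(a+b))| ≤ b`
for `a, b ≥ 0`.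
-/

open MeasureTheory

/-- `Real.log 0 = 0` realizes the convention `0 · log 0 = 0`. -/
noncomputable def JSdiv {n : ℕ} (a b : (Fin n → ℝ) → ℝ) : ℝ :=
  (1 / 2) * (∫ x, a x * Real.log (a x / ((a x + b x) / 2))) +
    (1 / 2) * (∫ x, b x * Real.log (b x / ((a x + b x) / 2)))

namespace Real

lemma abs_mul_log_div_add_le {a b : ℝ} (ha : 0 ≤ a) (hb : 0 ≤ b) :
    |a * log (a / (a + b))| ≤ b := by
  rcases ha.eq_or_lt with rfl | ha
  · simpa using hb
  have hab : 0 < a + b := by positivity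
  have hlog_le : log (a / (a + b)) ≤ 0 :=
    log_nonpos (by positivity) ((div_le_one hab).2 (by linarith))
  have hlog_ge : 1 - (a + b) / a ≤ log (a / (a + b)) := by
    simpa using one_sub_inv_le_log_of_pos (div_pos ha hab)
  rw [abs_le]
  refine ⟨?_, (mul_nonpos_of_nonneg_of_nonpos ha.le hlog_le).trans hb⟩
  calc -b = a * (1 - (a + b) / a) := by field_simp; ring
    _ ≤ a * log (a / (a + b)) := by gcongr

lemma mul_mul_log_div_half_add {a b : ℝ} (P : ℝ) (ha : 0 ≤ a) (hb : 0 ≤ b) :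
    a * P * log (a * P / ((a * P + b * P) / 2)) = a * log (a / (a + b)) * P + a * P * log 2 := by
  rcases eq_or_ne P 0 with rfl | hP
  · simp
  rcases ha.eq_or_lt with rfl | ha
  · simp
  have : a * P / ((a * P + b * P) / 2) = 2 * (a / (a + b)) := by
    field_simp
  rw [this, log_mul two_ne_zero (by positivity)]
  ring

end Real

section

open Real

variable {α : Type*} [MeasurableSpace α] {μ : Measure α} {a b P : α → ℝ}

lemma integrable_mul_log_div_add_mul (ha : AEMeasurable a μ) (hb : AEMeasurable b μ)
    (hP : AEMeasurable P μ) (ha0 : ∀ x, 0 ≤ a x) (hb0 : ∀ x, 0 ≤ b x)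
    (hbP : Integrable (fun x => b x * P x) μ) :
    Integrable (fun x => a x * log (a x / (a x + b x)) * P x) μ := by
  refine hbP.mono (by fun_prop) (ae_of_all _ fun x => ?_)
  rw [norm_mul _ (P x), norm_mul (b x), norm_of_nonneg (hb0 x), norm_eq_abs]
  gcongr
  exact abs_mul_log_div_add_le (ha0 x) (hb0 x)

lemma integrable_mul_log_div_add_add_mul (ha : AEMeasurable a μ) (hb : AEMeasurable b μ)
    (hP : AEMeasurable P μ) (ha0 : ∀ x, 0 ≤ a x) (hb0 : ∀ x, 0 ≤ b x)
    (haP : Integrable (fun x => a x * P x) μ) (hbP : Integrable (fun x => b x * P x) μ) :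
    Integrable (fun x =>
      (a x * log (a x / (a x + b x)) + b x * log (b x / (a x + b x))) * P x) μ := by
  have hb' := integrable_mul_log_div_add_mul hb ha hP hb0 ha0 haP
  simp only [add_comm (b _) (a _)] at hb'
  exact ((integrable_mul_log_div_add_mul ha hb hP ha0 hb0 hbP).add hb').congr
    (ae_of_all _ fun x => (add_mul _ _ _).symm)

lemma integral_mul_mul_log_div_half_add (ha : AEMeasurable a μ) (hb : AEMeasurable b μ)
    (hP : AEMeasurable P μ) (ha0 : ∀ x, 0 ≤ a x) (hb0 : ∀ x, 0 ≤ b x)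
    (haP : ∫ x, a x * P x ∂μ = 1) (hbP : Integrable (fun x => b x * P x) μ) :
    ∫ x, a x * P x * log (a x * P x / ((a x * P x + b x * P x) / 2)) ∂μ =
      ∫ x, a x * log (a x / (a x + b x)) * P x ∂μ + log 2 := by
  simp_rw [mul_mul_log_div_half_add _ (ha0 _) (hb0 _)]
  rw [integral_add (integrable_mul_log_div_add_mul ha hb hP ha0 hb0 hbP)
    ((Integrable.of_integral_ne_zero (by simp [haP])).mul_const _), integral_mul_const, haP, one_mul]

end

open Real in
lemma JSdiv_mul_eq {n : ℕ} {a b P : (Fin n → ℝ) → ℝ} (ha : AEMeasurable a) (hb : AEMeasurable b)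
    (hP : AEMeasurable P) (ha0 : ∀ x, 0 ≤ a x) (hb0 : ∀ x, 0 ≤ b x)
    (haP : ∫ x, a x * P x = 1) (hbP : ∫ x, b x * P x = 1) :
    JSdiv (fun x => a x * P x) (fun x => b x * P x) =
      1 / 2 * (∫ x, (a x * log (a x / (a x + b x)) + b x * log (b x / (a x + b x))) * P x) +
        log 2 := by
  have haP' : Integrable (fun x => a x * P x) := .of_integral_ne_zero (by simp [haP])
  have hbP' : Integrable (fun x => b x * P x) := .of_integral_ne_zero (by simp [hbP])
  have hb_half := integral_mul_mul_log_div_half_add hb ha hP hb0 ha0 hbP haP'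
  have hb_int := integrable_mul_log_div_add_mul hb ha hP hb0 ha0 haP'
  simp only [add_comm (b _ * P _), add_comm (b _) (a _)] at hb_half hb_int
  simp only [add_mul]
  rw [integral_add (integrable_mul_log_div_add_mul ha hb hP ha0 hb0 hbP') hb_int, JSdiv,
    integral_mul_mul_log_div_half_add ha hb hP ha0 hb0 haP hbP', hb_half]
  ring

theorem neural_bayes_DML_multi_partition_general {n K : ℕ} (hK : 1 ≤ K)
    (p : (Fin n → ℝ) → ℝ) (hp_int : ∫ x, p x = 1)
    (L : (Fin n → ℝ) → Fin K → ℝ) (hL_meas : Measurable L)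
    (hL_nonneg : ∀ x k, 0 ≤ L x k) (hL_sum : ∀ x, ∑ k, L x k = 1)
    (π : Fin K → ℝ) (hπ_def : ∀ k, π k = ∫ x, L x k * p x)
    (hπ_mem : ∀ k, π k ∈ Set.Ioo (0 : ℝ) 1)
    (q qbar f fbar : Fin K → (Fin n → ℝ) → ℝ)
    (hq : ∀ k x, q k x = L x k * p x / π k)
    (hqbar : ∀ k x, qbar k x = (1 - L x k) * p x / (1 - π k))
    (hf : ∀ k x, f k x = L x k / π k)
    (hfbar : ∀ k x, fbar k x = (1 - L x k) / (1 - π k)) :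
    (∀ k x, qbar k x = (p x - π k * q k x) / (1 - π k)) ∧
    (∀ k, ∫ x, qbar k x = 1) ∧
    (1 / (K : ℝ)) * ∑ k, JSdiv (q k) (qbar k) =
      (1 / (2 * (K : ℝ))) * (∫ x, (∑ k,
          (f k x * Real.log (f k x / (f k x + fbar k x)) +
            fbar k x * Real.log (fbar k x / (f k x + fbar k x)))) * p x) + Real.log 2 := by
  have hp : Integrable p := .of_integral_ne_zero (by simp [hp_int])
  have hπ0 k : π k ≠ 0 := (hπ_mem k).1.ne'
  have hπ1 k : 0 < 1 - π k := sub_pos.2 (hπ_mem k).2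
  have hLp k : Integrable fun x => L x k * p x := .of_integral_ne_zero (hπ_def k ▸ hπ0 k)
  have hL_le x k : L x k ≤ 1 :=
    hL_sum x ▸ Finset.single_le_sum (fun j _ => hL_nonneg x j) (Finset.mem_univ k)
  have hf_meas k : AEMeasurable (f k) := by rw [funext (hf k)]; fun_prop
  have hfbar_meas k : AEMeasurable (fbar k) := by rw [funext (hfbar k)]; fun_prop
  have hf0 k x : 0 ≤ f k x := hf k x ▸ div_nonneg (hL_nonneg x k) (hπ_mem k).1.le
  have hfbar0 k x : 0 ≤ fbar k x := hfbar k x ▸ div_nonneg (sub_nonneg.2 (hL_le x k)) (hπ1 k).le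
  have hq_f k : q k = fun x => f k x * p x := funext fun x => by rw [hq, hf]; ring
  have hqbar_fbar k : qbar k = fun x => fbar k x * p x := funext fun x => by rw [hqbar, hfbar]; ring
  have hq_int k : ∫ x, q k x = 1 := by simp_rw [hq, integral_div, ← hπ_def, div_self (hπ0 k)]
  have hqbar_int k : ∫ x, qbar k x = 1 := by
    simp_rw [hqbar, integral_div, sub_mul, one_mul, integral_sub hp (hLp k), hp_int, ← hπ_def,
      div_self (hπ1 k).ne']
  refine ⟨fun k x => by have := hπ0 k; rw [hqbar, hq]; field_simp, hqbar_int, ?_⟩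
  have hfp k : ∫ x, f k x * p x = 1 := hq_f k ▸ hq_int k
  have hfbarp k : ∫ x, fbar k x * p x = 1 := hqbar_fbar k ▸ hqbar_int k
  have hJS k : JSdiv (q k) (qbar k) = _ := hq_f k ▸ hqbar_fbar k ▸
    JSdiv_mul_eq (hf_meas k) (hfbar_meas k) hp.aemeasurable (hf0 k) (hfbar0 k) (hfp k) (hfbarp k)
  simp_rw [Finset.sum_mul]
  rw [integral_finsetSum _ fun k _ => integrable_mul_log_div_add_add_mul (hf_meas k)
    (hfbar_meas k) hp.aemeasurable (hf0 k) (hfbar0 k) (.of_integral_ne_zero (by simp [hfp k]))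
    (.of_integral_ne_zero (by simp [hfbarp k]))]
  have hK0 : (K : ℝ) ≠ 0 := Nat.cast_ne_zero.2 (by omega)
  simp only [hJS, Finset.sum_add_distrib, ← Finset.mul_sum, Finset.sum_const, Finset.card_univ,
    Fintype.card_fin, nsmul_eq_mul]
  field_simp

/-- **Multi-partition extension of Neural Bayes-DML (appendix Theorem 3).**
With `q_k = L_k p / π_k`, `q̄_k = (1−L_k) p / (1−π_k)`, `f_k = L_k/π_k`,
`f̄_k = (1−L_k)/(1−π_k)`: (i) `q̄_k = (p − π_k q_k)/(1−π_k)` and `∫ q̄_k = 1`; and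
(ii) the average Jensen–Shannon divergence `(1/K) ∑ₖ JS(q_k ‖ q̄_k)` equals
`(1/(2K)) ∫ ∑ₖ [f_k log(f_k/(f_k+f̄_k)) + f̄_k log(f̄_k/(f_k+f̄_k))] p + log 2`. -/
theorem neural_bayes_DML_multi_partition {n K : ℕ} (hK : 1 ≤ K)
    (p : (Fin n → ℝ) → ℝ) (hp_meas : Measurable p)
    (hp_nonneg : ∀ x, 0 ≤ p x) (hp_int : ∫ x, p x = 1)
    (L : (Fin n → ℝ) → Fin K → ℝ) (hL_meas : Measurable L)
    (hL_nonneg : ∀ x k, 0 ≤ L x k) (hL_sum : ∀ x, ∑ k, L x k = 1)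
    (π : Fin K → ℝ) (hπ_def : ∀ k, π k = ∫ x, L x k * p x)
    (hπ_mem : ∀ k, π k ∈ Set.Ioo (0 : ℝ) 1)
    (q qbar f fbar : Fin K → (Fin n → ℝ) → ℝ)
    (hq : ∀ k x, q k x = L x k * p x / π k)
    (hqbar : ∀ k x, qbar k x = (1 - L x k) * p x / (1 - π k))
    (hf : ∀ k x, f k x = L x k / π k)
    (hfbar : ∀ k x, fbar k x = (1 - L x k) / (1 - π k)) :
    (∀ k x, qbar k x = (p x - π k * q k x) / (1 - π k)) ∧
    (∀ k, ∫ x, qbar k x = 1) ∧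
    (1 / (K : ℝ)) * ∑ k, JSdiv (q k) (qbar k) =
      (1 / (2 * (K : ℝ))) * (∫ x, (∑ k,
          (f k x * Real.log (f k x / (f k x + fbar k x)) +
            fbar k x * Real.log (fbar k x / (f k x + fbar k x)))) * p x) + Real.log 2 :=
  neural_bayes_DML_multi_partition_general hK p hp_int L hL_meas hL_nonneg hL_sum π hπ_def hπ_mem q
    qbar f fbar hq hqbar hf hfbar
end
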